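/- There exists a unique γ₁ > 0 with f₁(γ₁) = (2η−μ)/(2δ), and for every γ > γ₁ there exists a unique c > 0 such that g₂(c) = f₁(γ). -/

import Mathlib

open Real Filter Set

/-- Positive root θ₊ of (σ²/2)r² + ηr − δ = 0. -/
noncomputable def thetaP (σ η δ : ℝ) : ℝ := (-η + Real.sqrt (η ^ 2 + 2 * σ ^ 2 * δ)) / σ ^ 2

/-- Negative root θ₋ of (σ²/2)r² + ηr − δ = 0. -/
noncomputable def thetaM (σ η δ : ℝ) : ℝ := (-η - Real.sqrt (η ^ 2 + 2 * σ ^ 2 * δ)) / σ ^ 2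

/-- f₁(γ) = ηγ/(δ(δ+γ)) − σ²/(η + √(η² + 2σ²(δ+γ))). -/
noncomputable def f1 (σ η δ : ℝ) (γ : ℝ) : ℝ :=
  η * γ / (δ * (δ + γ)) - σ ^ 2 / (η + Real.sqrt (η ^ 2 + 2 * σ ^ 2 * (δ + γ)))

/-- a₁ = 1 − θ₋(2η−μ)/(2δ). -/
noncomputable def a1 (σ η δ μ : ℝ) : ℝ := 1 - thetaM σ η δ * (2 * η - μ) / (2 * δ)

/-- a₂ = 1 − θ₊(2η−μ)/(2δ). -/
noncomputable def a2 (σ η δ μ : ℝ) : ℝ := 1 - thetaP σ η δ * (2 * η - μ) / (2 * δ)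

/-- h₂(x) = (a₁e^{θ₊x} − a₂e^{θ₋x})/(θ₊ − θ₋). -/
noncomputable def h2 (σ η δ μ : ℝ) (x : ℝ) : ℝ :=
  (a1 σ η δ μ * Real.exp (thetaP σ η δ * x) - a2 σ η δ μ * Real.exp (thetaM σ η δ * x)) /
    (thetaP σ η δ - thetaM σ η δ)

/-- h₂'(x). -/
noncomputable def h2' (σ η δ μ : ℝ) (x : ℝ) : ℝ :=
  (a1 σ η δ μ * thetaP σ η δ * Real.exp (thetaP σ η δ * x) -
      a2 σ η δ μ * thetaM σ η δ * Real.exp (thetaM σ η δ * x)) /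
    (thetaP σ η δ - thetaM σ η δ)

/-- g₂(b) = h₂(b)/h₂'(b). -/
noncomputable def g2 (σ η δ μ : ℝ) (b : ℝ) : ℝ := h2 σ η δ μ b / h2' σ η δ μ b


/-! `f1` is continuous and strictly increasing on `[0, ∞)`, with `f1 0 ≤ 0` and limit
`η / δ > (2η - μ) / (2δ) > 0`, which gives `γ₁` by the intermediate value theorem.
For `v = f1 γ` with `γ > γ₁` one has `(2η - μ) / (2δ) < v < η / δ`. Since `h₂' > 0`, the equation
`g₂ c = v` reads `h₂ c - v h₂' c = 0`, i.e. `A e^{θ₊ c} = B e^{θ₋ c}` with `A = a₁ (1 - v θ₊)`,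
`B = a₂ (1 - v θ₋)`. Here `0 < A < B`, because `B - A = (θ₊ - θ₋) (v - (2η - μ) / (2δ))`,
so `c = log (B / A) / (θ₊ - θ₋)` is the unique solution, and it is positive. -/

open Topology

theorem exists_gt_eq_of_tendsto {f : ℝ → ℝ} {a y L : ℝ} (hf : ContinuousOn f (Ici a))
    (ha : f a < y) (hlim : Tendsto f atTop (𝓝 L)) (hy : y < L) : ∃ x, a < x ∧ f x = y := by
  obtain ⟨b, hab, hb⟩ := ((hlim.eventually (lt_mem_nhds hy)).and (eventually_ge_atTop a)).exists
  obtain ⟨x, ⟨hax, -⟩, hx⟩ :=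
    intermediate_value_Ioc hb (hf.mono Icc_subset_Ici_self) ⟨ha, hab.le⟩
  exact ⟨x, hax, hx⟩

theorem mul_exp_eq_mul_exp_iff {A B p q x : ℝ} (hA : 0 < A) (hB : 0 < B) (hpq : p ≠ q) :
    A * exp (p * x) = B * exp (q * x) ↔ x = log (B / A) / (p - q) := by
  calc A * exp (p * x) = B * exp (q * x) ↔ exp ((p - q) * x) = B / A := by
        rw [sub_mul, exp_sub, div_eq_div_iff (exp_pos _).ne' hA.ne', mul_comm (exp _) A]
    _ ↔ (p - q) * x = log (B / A) :=
        ⟨fun h => by rw [← h, log_exp], fun h => by rw [h, exp_log (div_pos hB hA)]⟩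
    _ ↔ x = log (B / A) / (p - q) := by rw [eq_div_iff (sub_ne_zero.2 hpq), mul_comm]

theorem existsUnique_pos_mul_exp_eq {A B p q : ℝ} (hA : 0 < A) (hAB : A < B) (hqp : q < p) :
    ∃! x, 0 < x ∧ A * exp (p * x) = B * exp (q * x) := by
  have hB : 0 < B := hA.trans hAB
  refine ⟨log (B / A) / (p - q), ⟨?_, (mul_exp_eq_mul_exp_iff hA hB hqp.ne').2 rfl⟩,
    fun x hx => (mul_exp_eq_mul_exp_iff hA hB hqp.ne').1 hx.2⟩
  exact div_pos (log_pos ((one_lt_div hA).2 hAB)) (sub_pos.2 hqp)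

section

variable {σ η δ μ : ℝ}

theorem abs_lt_sqrt_discr (hσ : σ ≠ 0) (hδ : 0 < δ) : |η| < √(η ^ 2 + 2 * σ ^ 2 * δ) := by
  rw [← sqrt_sq_eq_abs]
  exact sqrt_lt_sqrt (sq_nonneg η) (by linarith [show 0 < σ ^ 2 * δ by positivity])

theorem thetaP_pos (hσ : σ ≠ 0) (hδ : 0 < δ) : 0 < thetaP σ η δ :=
  div_pos (by linarith [le_abs_self η, abs_lt_sqrt_discr (η := η) hσ hδ]) (by positivity)

theorem thetaM_neg (hσ : σ ≠ 0) (hδ : 0 < δ) : thetaM σ η δ < 0 :=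
  div_neg_of_neg_of_pos (by linarith [neg_abs_le η, abs_lt_sqrt_discr (η := η) hσ hδ])
    (by positivity)

theorem thetaP_isRoot (hσ : σ ≠ 0) (hδ : 0 < δ) :
    σ ^ 2 / 2 * thetaP σ η δ ^ 2 + η * thetaP σ η δ = δ := by
  have hs := sq_sqrt (show 0 ≤ η ^ 2 + 2 * σ ^ 2 * δ by positivity)
  unfold thetaP
  set s := √(η ^ 2 + 2 * σ ^ 2 * δ)
  field_simp
  linear_combination hs

theorem eta_mul_thetaP_lt (hσ : σ ≠ 0) (hδ : 0 < δ) : η * thetaP σ η δ < δ := by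
  have hroot := thetaP_isRoot (η := η) hσ hδ
  have := mul_pos (pow_pos (thetaP_pos (η := η) hσ hδ) 2) (show 0 < σ ^ 2 by positivity)
  nlinarith

theorem f1_eq (hδ : δ ≠ 0) {γ : ℝ} (hδγ : δ + γ ≠ 0) :
    f1 σ η δ γ = η / δ - η / (δ + γ) - σ ^ 2 / (η + √(η ^ 2 + 2 * σ ^ 2 * (δ + γ))) := by
  rw [f1]
  congr 1
  field_simp
  ring

theorem f1_zero_nonpos (hη : 0 ≤ η) : f1 σ η δ 0 ≤ 0 := by
  rw [f1, mul_zero, zero_div, zero_sub, neg_nonpos]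
  positivity

theorem f1_lt_div (hδ : 0 < δ) (hη : 0 < η) {γ : ℝ} (hγ : 0 ≤ γ) : f1 σ η δ γ < η / δ := by
  rw [f1_eq hδ.ne' (by positivity)]
  have : 0 < η / (δ + γ) := by positivity
  have : 0 ≤ σ ^ 2 / (η + √(η ^ 2 + 2 * σ ^ 2 * (δ + γ))) := by positivity
  linarith

theorem f1_strictMonoOn (hδ : 0 < δ) (hη : 0 < η) : StrictMonoOn (f1 σ η δ) (Ici 0) := by
  intro x (hx : 0 ≤ x) y (hy : 0 ≤ y) hxy
  rw [f1_eq hδ.ne' (by positivity), f1_eq hδ.ne' (by positivity)]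
  have h1 : η / (δ + y) < η / (δ + x) := div_lt_div_of_pos_left hη (by positivity) (by linarith)
  have h2 : σ ^ 2 / (η + √(η ^ 2 + 2 * σ ^ 2 * (δ + y))) ≤
      σ ^ 2 / (η + √(η ^ 2 + 2 * σ ^ 2 * (δ + x))) := by
    gcongr
  linarith

theorem continuousOn_f1 (hδ : 0 < δ) (hη : 0 < η) : ContinuousOn (f1 σ η δ) (Ici 0) := by
  intro γ (hγ : 0 ≤ γ)
  have h1 : δ * (δ + γ) ≠ 0 := by positivity
  have h2 : η + √(η ^ 2 + 2 * σ ^ 2 * (δ + γ)) ≠ 0 := by positivity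
  unfold f1
  fun_prop (disch := assumption)

theorem tendsto_f1_atTop (hσ : σ ≠ 0) (hδ : 0 < δ) : Tendsto (f1 σ η δ) atTop (𝓝 (η / δ)) := by
  have hδγ : Tendsto (fun γ => δ + γ) atTop atTop := tendsto_atTop_add_const_left _ δ tendsto_id
  have hsqrt : Tendsto (fun γ => η + √(η ^ 2 + 2 * σ ^ 2 * (δ + γ))) atTop atTop :=
    tendsto_atTop_add_const_left _ η (tendsto_sqrt_atTop.comp
      (tendsto_atTop_add_const_left _ _ (hδγ.const_mul_atTop (by positivity))))
  have hlim := ((tendsto_const_nhds (x := η / δ)).sub (hδγ.const_div_atTop η)).sub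
    (hsqrt.const_div_atTop (σ ^ 2))
  rw [sub_zero, sub_zero] at hlim
  refine hlim.congr' ?_
  filter_upwards [eventually_ge_atTop 0] with γ hγ
  exact (f1_eq hδ.ne' (by positivity)).symm

theorem a1_pos (hσ : σ ≠ 0) (hδ : 0 < δ) (hμ : μ ≤ 2 * η) : 0 < a1 σ η δ μ := by
  have : thetaM σ η δ * (2 * η - μ) / (2 * δ) ≤ 0 :=
    div_nonpos_of_nonpos_of_nonneg
      (mul_nonpos_of_nonpos_of_nonneg (thetaM_neg hσ hδ).le (by linarith)) (by positivity)
  rw [a1]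
  linarith

theorem a2_pos (hσ : σ ≠ 0) (hδ : 0 < δ) (hμ : 0 ≤ μ) : 0 < a2 σ η δ μ := by
  have := eta_mul_thetaP_lt (η := η) hσ hδ
  have := mul_nonneg hμ (thetaP_pos (η := η) hσ hδ).le
  rw [a2, sub_pos, div_lt_one (by positivity)]
  linarith

theorem h2'_pos (hσ : σ ≠ 0) (hδ : 0 < δ) (ha1 : 0 < a1 σ η δ μ) (ha2 : 0 < a2 σ η δ μ)
    (x : ℝ) : 0 < h2' σ η δ μ x := by
  have hP := thetaP_pos (η := η) hσ hδ
  have hM := thetaM_neg (η := η) hσ hδ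
  have := mul_pos (mul_pos ha1 hP) (exp_pos (thetaP σ η δ * x))
  have := mul_neg_of_neg_of_pos (mul_neg_of_pos_of_neg ha2 hM) (exp_pos (thetaM σ η δ * x))
  exact div_pos (by linarith) (by linarith)

theorem h2_sub_mul_h2' (v x : ℝ) :
    h2 σ η δ μ x - v * h2' σ η δ μ x =
      (a1 σ η δ μ * (1 - v * thetaP σ η δ) * exp (thetaP σ η δ * x) -
        a2 σ η δ μ * (1 - v * thetaM σ η δ) * exp (thetaM σ η δ * x)) /
      (thetaP σ η δ - thetaM σ η δ) := by
  unfold h2 h2'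
  ring

theorem g2_eq_iff (hσ : σ ≠ 0) (hδ : 0 < δ) (ha1 : 0 < a1 σ η δ μ) (ha2 : 0 < a2 σ η δ μ)
    {v x : ℝ} :
    g2 σ η δ μ x = v ↔
      a1 σ η δ μ * (1 - v * thetaP σ η δ) * exp (thetaP σ η δ * x) =
        a2 σ η δ μ * (1 - v * thetaM σ η δ) * exp (thetaM σ η δ * x) := by
  have hPM : thetaP σ η δ - thetaM σ η δ ≠ 0 := by
    linarith [thetaP_pos (η := η) hσ hδ, thetaM_neg (η := η) hσ hδ]
  rw [g2, div_eq_iff (h2'_pos hσ hδ ha1 ha2 x).ne', ← sub_eq_zero, h2_sub_mul_h2',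
    div_eq_zero_iff, or_iff_left hPM, sub_eq_zero]

theorem existsUnique_pos_g2_eq (hσ : σ ≠ 0) (hδ : 0 < δ) (hμ₀ : 0 ≤ μ) (hμ : μ ≤ 2 * η) {v : ℝ}
    (hv₀ : (2 * η - μ) / (2 * δ) < v) (hv : v < η / δ) : ∃! c, 0 < c ∧ g2 σ η δ μ c = v := by
  have hP := thetaP_pos (η := η) hσ hδ
  have hM := thetaM_neg (η := η) hσ hδ
  have ha1 := a1_pos hσ hδ hμ
  have ha2 := a2_pos (η := η) hσ hδ hμ₀
  have hvpos : 0 < v := lt_of_le_of_lt (div_nonneg (by linarith) (by positivity)) hv₀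
  have hvP : v * thetaP σ η δ < 1 :=
    calc v * thetaP σ η δ < η / δ * thetaP σ η δ := mul_lt_mul_of_pos_right hv hP
      _ = η * thetaP σ η δ / δ := div_mul_eq_mul_div η δ _
      _ < 1 := (div_lt_one hδ).2 (eta_mul_thetaP_lt hσ hδ)
  have hA : 0 < a1 σ η δ μ * (1 - v * thetaP σ η δ) := mul_pos ha1 (by linarith)
  have hAB : a1 σ η δ μ * (1 - v * thetaP σ η δ) < a2 σ η δ μ * (1 - v * thetaM σ η δ) := by
    have := mul_pos (sub_pos.2 (hM.trans hP)) (sub_pos.2 hv₀)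
    rw [a1, a2]
    linear_combination this
  exact (existsUnique_congr fun c => and_congr_right fun _ => g2_eq_iff hσ hδ ha1 ha2).2
    (existsUnique_pos_mul_exp_eq hA hAB (hM.trans hP))

end

theorem exists_unique_gamma1_and_barrier_general (σ η δ μ : ℝ)
    (hσ : 0 < σ) (hδ : 0 < δ) (hημ : η < μ) (hμ2 : μ < 2 * η) :
    ∃ γ₁ : ℝ, 0 < γ₁ ∧ f1 σ η δ γ₁ = (2 * η - μ) / (2 * δ) ∧
      (∀ γ : ℝ, 0 < γ → f1 σ η δ γ = (2 * η - μ) / (2 * δ) → γ = γ₁) ∧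
      (∀ γ : ℝ, γ₁ < γ → ∃! c : ℝ, 0 < c ∧ g2 σ η δ μ c = f1 σ η δ γ) := by
  have hη : 0 < η := by linarith
  have hmono := f1_strictMonoOn (σ := σ) hδ hη
  have hk₀ : 0 < (2 * η - μ) / (2 * δ) := div_pos (by linarith) (by positivity)
  have hk : (2 * η - μ) / (2 * δ) < η / δ := by
    rw [div_lt_div_iff₀ (by positivity) hδ]
    nlinarith
  obtain ⟨γ₁, hγ₁, hfγ₁⟩ := exists_gt_eq_of_tendsto (continuousOn_f1 hδ hη)
    ((f1_zero_nonpos hη.le).trans_lt hk₀) (tendsto_f1_atTop hσ.ne' hδ) hk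
  refine ⟨γ₁, hγ₁, hfγ₁, fun γ hγ hfγ => hmono.injOn hγ.le hγ₁.le (hfγ.trans hfγ₁.symm),
    fun γ hγ => existsUnique_pos_g2_eq hσ.ne' hδ (by linarith) hμ2.le ?_
      (f1_lt_div hδ hη (hγ₁.trans hγ).le)⟩
  exact hfγ₁ ▸ hmono hγ₁.le (hγ₁.trans hγ).le hγ

theorem exists_unique_gamma1_and_barrier (σ η δ μ : ℝ)
    (hσ : 0 < σ) (hδ : 0 < δ) (hη : 0 < η) (hημ : η < μ) (hμ2 : μ < 2 * η) :
    ∃ γ₁ : ℝ, 0 < γ₁ ∧ f1 σ η δ γ₁ = (2 * η - μ) / (2 * δ) ∧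
      (∀ γ : ℝ, 0 < γ → f1 σ η δ γ = (2 * η - μ) / (2 * δ) → γ = γ₁) ∧
      (∀ γ : ℝ, γ₁ < γ → ∃! c : ℝ, 0 < c ∧ g2 σ η δ μ c = f1 σ η δ γ) :=
  exists_unique_gamma1_and_barrier_general σ η δ μ hσ hδ hημ hμ2
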